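/- For stable configuration structures without equidepth auto-concurrency, any reverse bisimulation is a reverse homogeneous equidepth step bisimulation: in particular, if R is an RB and R(X, Y), then for every n ∈ ℕ, R(X_{≤n}, Y_{≤n}) and the sets of labelled events of X and Y at each depth level n coincide. -/

import Mathlib

universe u v

/-- A configuration structure over event type `E` and label alphabet `L`:
a family of finite sets of events (configurations) with a labelling. -/
structure CS (E : Type u) (L : Type v) where
  C : Set (Set E)
  finite : ∀ X ∈ C, X.Finite
  label : E → L

namespace CS

variable {E E₁ E₂ : Type u} {L : Type v}

/-- Stability: rooted, connected, closed under bounded unions and intersections. -/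
def IsStable (𝒞 : CS E L) : Prop :=
  ∅ ∈ 𝒞.C ∧
  (∀ X ∈ 𝒞.C, X ≠ ∅ → ∃ e ∈ X, X \ {e} ∈ 𝒞.C) ∧
  (∀ X ∈ 𝒞.C, ∀ Y ∈ 𝒞.C, ∀ Z ∈ 𝒞.C, X ∪ Y ⊆ Z → X ∪ Y ∈ 𝒞.C) ∧
  (∀ X ∈ 𝒞.C, ∀ Y ∈ 𝒞.C, ∀ Z ∈ 𝒞.C, X ∪ Y ⊆ Z → X ∩ Y ∈ 𝒞.C)

/-- Causality: `d ≤_X e` iff every sub-configuration of `X` containing `e` contains `d`. -/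
def le (𝒞 : CS E L) (X : Set E) (d e : E) : Prop :=
  ∀ Y ∈ 𝒞.C, Y ⊆ X → e ∈ Y → d ∈ Y

/-- Strict causality `d <_X e`. -/
def lt (𝒞 : CS E L) (X : Set E) (d e : E) : Prop :=
  le 𝒞 X d e ∧ d ≠ e

/-- Concurrency within a configuration. -/
def co (𝒞 : CS E L) (X : Set E) (d e : E) : Prop :=
  ¬ lt 𝒞 X d e ∧ ¬ lt 𝒞 X e d

/-- The set of minimal events of a configuration. -/
def minE (𝒞 : CS E L) (X : Set E) : Set E :=
  {e | e ∈ X ∧ ∀ d ∈ X, ¬ lt 𝒞 X d e}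

/-- Depth of an event in a configuration: the length of the longest
causal chain (w.r.t. `<_X`) in `X` up to and including `e`. -/
noncomputable def depth (𝒞 : CS E L) (X : Set E) (e : E) : ℕ :=
  sSup {n | ∃ l : List E, l.length = n ∧ l.Chain' (lt 𝒞 X) ∧
    (∀ x ∈ l, x ∈ X) ∧ l.getLast? = some e}

/-- Multiset of labels of a (finite) set of events. -/
noncomputable def labelMS (𝒞 : CS E L) (S : Set E) : Multiset L := by
  classical exact if h : S.Finite then h.toFinset.val.map 𝒞.label else 0

/-- Single-event forward transition `X —a→ X'`. -/
def FTrans (𝒞 : CS E L) (a : L) (X X' : Set E) : Prop :=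
  X ∈ 𝒞.C ∧ X' ∈ 𝒞.C ∧ X ⊆ X' ∧ ∃ e, X' \ X = {e} ∧ 𝒞.label e = a

/-- Single-event reverse transition `X ⇝a X'`. -/
def RTrans (𝒞 : CS E L) (a : L) (X X' : Set E) : Prop :=
  FTrans 𝒞 a X' X

/-- Step transition `X —A→ X'`: the added events are pairwise concurrent
in `X'` and carry the label multiset `A`. -/
def Step (𝒞 : CS E L) (A : Multiset L) (X X' : Set E) : Prop :=
  X ∈ 𝒞.C ∧ X' ∈ 𝒞.C ∧ X ⊆ X' ∧ ∃ F : Finset E, ↑F = X' \ X ∧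
    (∀ d ∈ F, ∀ e ∈ F, co 𝒞 X' d e) ∧ F.val.map 𝒞.label = A

/-- Reverse step transition `X ⇝A X'`. -/
def RStep (𝒞 : CS E L) (A : Multiset L) (X X' : Set E) : Prop :=
  Step 𝒞 A X' X

/-- Equidepth step: all added events have the same depth in `X'`. -/
def EqStep (𝒞 : CS E L) (A : Multiset L) (X X' : Set E) : Prop :=
  Step 𝒞 A X X' ∧ ∀ d ∈ X' \ X, ∀ e ∈ X' \ X, depth 𝒞 X' d = depth 𝒞 X' e

/-- Reverse equidepth step `X ⇝A= X'`. -/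
def REqStep (𝒞 : CS E L) (A : Multiset L) (X X' : Set E) : Prop :=
  EqStep 𝒞 A X' X

/-- Single-event forward transition with depth: the new event has label `a`
and depth `k` in `X'`. -/
def FTransD (𝒞 : CS E L) (a : L) (k : ℕ) (X X' : Set E) : Prop :=
  X ∈ 𝒞.C ∧ X' ∈ 𝒞.C ∧ X ⊆ X' ∧
    ∃ e, X' \ X = {e} ∧ 𝒞.label e = a ∧ depth 𝒞 X' e = k

/-- Single-event reverse transition with depth. -/
def RTransD (𝒞 : CS E L) (a : L) (k : ℕ) (X X' : Set E) : Prop :=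
  FTransD 𝒞 a k X' X

/-- A multiset of labels is homogeneous if all its elements are equal. -/
def Hom (A : Multiset L) : Prop := ∀ a ∈ A, ∀ b ∈ A, a = b

/-- `R` is a relation between configurations of `𝒞` and `𝒟`, containing `(∅, ∅)`. -/
def Dom (𝒞 : CS E₁ L) (𝒟 : CS E₂ L) (R : Set E₁ → Set E₂ → Prop) : Prop :=
  R ∅ ∅ ∧ ∀ X Y, R X Y → X ∈ 𝒞.C ∧ Y ∈ 𝒟.C

/-- Interleaving bisimulation. -/
def IsIB (𝒞 : CS E₁ L) (𝒟 : CS E₂ L) (R : Set E₁ → Set E₂ → Prop) : Prop :=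
  Dom 𝒞 𝒟 R ∧ ∀ X Y, R X Y →
    (∀ a X', FTrans 𝒞 a X X' → ∃ Y', FTrans 𝒟 a Y Y' ∧ R X' Y') ∧
    (∀ a Y', FTrans 𝒟 a Y Y' → ∃ X', FTrans 𝒞 a X X' ∧ R X' Y')

/-- Reverse bisimulation: an IB also matching reverse single-event transitions. -/
def IsRB (𝒞 : CS E₁ L) (𝒟 : CS E₂ L) (R : Set E₁ → Set E₂ → Prop) : Prop :=
  IsIB 𝒞 𝒟 R ∧ ∀ X Y, R X Y →
    (∀ a X', RTrans 𝒞 a X X' → ∃ Y', RTrans 𝒟 a Y Y' ∧ R X' Y') ∧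
    (∀ a Y', RTrans 𝒟 a Y Y' → ∃ X', RTrans 𝒞 a X X' ∧ R X' Y')

/-- Step bisimulation. -/
def IsSB (𝒞 : CS E₁ L) (𝒟 : CS E₂ L) (R : Set E₁ → Set E₂ → Prop) : Prop :=
  Dom 𝒞 𝒟 R ∧ ∀ X Y, R X Y →
    (∀ A X', Step 𝒞 A X X' → ∃ Y', Step 𝒟 A Y Y' ∧ R X' Y') ∧
    (∀ A Y', Step 𝒟 A Y Y' → ∃ X', Step 𝒞 A X X' ∧ R X' Y')

/-- Reverse step bisimulation: an SB also matching reverse steps. -/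
def IsRSB (𝒞 : CS E₁ L) (𝒟 : CS E₂ L) (R : Set E₁ → Set E₂ → Prop) : Prop :=
  IsSB 𝒞 𝒟 R ∧ ∀ X Y, R X Y →
    (∀ A X', RStep 𝒞 A X X' → ∃ Y', RStep 𝒟 A Y Y' ∧ R X' Y') ∧
    (∀ A Y', RStep 𝒟 A Y Y' → ∃ X', RStep 𝒞 A X X' ∧ R X' Y')

/-- Reverse homogeneous step bisimulation: matches forward single-event
transitions and reverse homogeneous steps. -/
def IsRHSB (𝒞 : CS E₁ L) (𝒟 : CS E₂ L) (R : Set E₁ → Set E₂ → Prop) : Prop :=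
  Dom 𝒞 𝒟 R ∧ ∀ X Y, R X Y →
    (∀ a X', FTrans 𝒞 a X X' → ∃ Y', FTrans 𝒟 a Y Y' ∧ R X' Y') ∧
    (∀ a Y', FTrans 𝒟 a Y Y' → ∃ X', FTrans 𝒞 a X X' ∧ R X' Y') ∧
    (∀ A X', Hom A → RStep 𝒞 A X X' → ∃ Y', RStep 𝒟 A Y Y' ∧ R X' Y') ∧
    (∀ A Y', Hom A → RStep 𝒟 A Y Y' → ∃ X', RStep 𝒞 A X X' ∧ R X' Y')

/-- Reverse homogeneous equidepth step bisimulation. -/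
def IsRHESB (𝒞 : CS E₁ L) (𝒟 : CS E₂ L) (R : Set E₁ → Set E₂ → Prop) : Prop :=
  Dom 𝒞 𝒟 R ∧ ∀ X Y, R X Y →
    (∀ a X', FTrans 𝒞 a X X' → ∃ Y', FTrans 𝒟 a Y Y' ∧ R X' Y') ∧
    (∀ a Y', FTrans 𝒟 a Y Y' → ∃ X', FTrans 𝒞 a X X' ∧ R X' Y') ∧
    (∀ A X', Hom A → REqStep 𝒞 A X X' → ∃ Y', REqStep 𝒟 A Y Y' ∧ R X' Y') ∧
    (∀ A Y', Hom A → REqStep 𝒟 A Y Y' → ∃ X', REqStep 𝒞 A X X' ∧ R X' Y')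

/-- Depth-respecting bisimulation. -/
def IsDB (𝒞 : CS E₁ L) (𝒟 : CS E₂ L) (R : Set E₁ → Set E₂ → Prop) : Prop :=
  Dom 𝒞 𝒟 R ∧ ∀ X Y, R X Y →
    (∀ a k X', FTransD 𝒞 a k X X' → ∃ Y', FTransD 𝒟 a k Y Y' ∧ R X' Y') ∧
    (∀ a k Y', FTransD 𝒟 a k Y Y' → ∃ X', FTransD 𝒞 a k X X' ∧ R X' Y')

/-- Reverse depth-respecting bisimulation. -/
def IsRDB (𝒞 : CS E₁ L) (𝒟 : CS E₂ L) (R : Set E₁ → Set E₂ → Prop) : Prop :=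
  IsDB 𝒞 𝒟 R ∧ ∀ X Y, R X Y →
    (∀ a k X', RTransD 𝒞 a k X X' → ∃ Y', RTransD 𝒟 a k Y Y' ∧ R X' Y') ∧
    (∀ a k Y', RTransD 𝒟 a k Y Y' → ∃ X', RTransD 𝒞 a k X X' ∧ R X' Y')

/-- The lifting of a configuration structure w.r.t. a configuration `M`. -/
def lift (𝒞 : CS E L) (M : Set E) : CS E L where
  C := {Z | ∃ X, X ∈ 𝒞.C ∧ M ⊆ X ∧ minE 𝒞 X = minE 𝒞 M ∧ Z = X \ M}
  finite := by
    rintro Z ⟨X, hX, -, -, rfl⟩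
    exact (𝒞.finite X hX).subset Set.diff_subset
  label := 𝒞.label

/-- Events of `X` of depth at most `n`. -/
def levelLe (𝒞 : CS E L) (X : Set E) (n : ℕ) : Set E :=
  {e | e ∈ X ∧ depth 𝒞 X e ≤ n}

/-- Events of `X` of depth exactly `n`. -/
def levelEq (𝒞 : CS E L) (X : Set E) (n : ℕ) : Set E :=
  {e | e ∈ X ∧ depth 𝒞 X e = n}

/-- No equidepth auto-concurrency: distinct concurrent events never share
both label and depth. -/
def NoEqAC (𝒞 : CS E L) : Prop :=
  ∀ X ∈ 𝒞.C, ∀ d ∈ X, ∀ e ∈ X, co 𝒞 X d e → 𝒞.label d = 𝒞.label e →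
    depth 𝒞 X d = depth 𝒞 X e → d = e

/-- `f` (a set of pairs) is a label- and order-preserving isomorphism
between configurations `X` and `Y`. -/
def IsIso (𝒞 : CS E₁ L) (𝒟 : CS E₂ L) (X : Set E₁) (Y : Set E₂)
    (f : Set (E₁ × E₂)) : Prop :=
  (∀ p ∈ f, p.1 ∈ X ∧ p.2 ∈ Y) ∧
  (∀ d ∈ X, ∃! e, (d, e) ∈ f) ∧
  (∀ e ∈ Y, ∃! d, (d, e) ∈ f) ∧
  (∀ p ∈ f, 𝒞.label p.1 = 𝒟.label p.2) ∧
  (∀ p ∈ f, ∀ q ∈ f, (lt 𝒞 X p.1 q.1 ↔ lt 𝒟 Y p.2 q.2))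

/-- Hereditary history-preserving bisimulation. -/
def IsHH (𝒞 : CS E₁ L) (𝒟 : CS E₂ L)
    (R : Set (Set E₁ × Set E₂ × Set (E₁ × E₂))) : Prop :=
  (∅, ∅, ∅) ∈ R ∧
  ∀ X Y f, (X, Y, f) ∈ R →
    X ∈ 𝒞.C ∧ Y ∈ 𝒟.C ∧ IsIso 𝒞 𝒟 X Y f ∧
    (∀ a X', FTrans 𝒞 a X X' → ∃ Y' f', FTrans 𝒟 a Y Y' ∧
      (X', Y', f') ∈ R ∧ {p ∈ f' | p.1 ∈ X} = f) ∧
    (∀ a Y', FTrans 𝒟 a Y Y' → ∃ X' f', FTrans 𝒞 a X X' ∧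
      (X', Y', f') ∈ R ∧ {p ∈ f' | p.1 ∈ X} = f) ∧
    (∀ a X', RTrans 𝒞 a X X' → ∃ Y' f', RTrans 𝒟 a Y Y' ∧
      (X', Y', f') ∈ R ∧ {p ∈ f | p.1 ∈ X'} = f')

end CS

open CS

/-!
Write `L X n` for the set of labels of the events of depth `n` in `X`. Without equidepth
auto-concurrency distinct events of one level carry distinct labels, and removing a maximal
event `e` from `X` changes `L X` only at `depth e`, where it deletes the label of `e`.

An RB matches the removal of a maximal event on one side with the removal of an equally
labelled maximal event on the other. By induction on `|X|`, related configurations then have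
`L (X \ e) = L (Y \ e')` for all matched pairs; comparing top levels shows that `X` and `Y` have
the same height and that some event of maximal depth in `X` is matched at the same depth, which
forces `L X = L Y`. Hence matched maximal events have equal depths, and removing events of
maximal depth pairwise leads from `R X Y` to `R X_{≤n} Y_{≤n}`. A homogeneous equidepth reverse
step removes at most one event, so it is trivial or a single reverse transition.
-/

theorem eq_of_update_sdiff_singleton_eq {ι α : Type*} [DecidableEq ι] {f g : ι → Set α}
    {i : ι} {a : α} (hf : a ∈ f i) (hg : a ∈ g i)
    (h : Function.update f i (f i \ {a}) = Function.update g i (g i \ {a})) : f = g := by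
  funext k
  have hk := congrFun h k
  rcases eq_or_ne k i with rfl | hki
  · simp only [Function.update_self] at hk
    rw [← Set.insert_eq_of_mem hf, ← Set.insert_eq_of_mem hg, ← Set.insert_sdiff_singleton,
      hk, Set.insert_sdiff_singleton]
  · simpa only [Function.update_of_ne hki] using hk

namespace CS

section Causality

variable {E L : Type*} {𝒞 : CS E L} {X X' : Set E} {a b c d e f : E}

theorem le.anti (h : X' ⊆ X) (hle : le 𝒞 X d f) : le 𝒞 X' d f :=
  fun Z hZ hZX hfZ => hle Z hZ (hZX.trans h) hfZ

theorem lt.anti (h : X' ⊆ X) (hlt : lt 𝒞 X d f) : lt 𝒞 X' d f :=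
  ⟨hlt.1.anti h, hlt.2⟩

theorem le.mem (hX : X ∈ 𝒞.C) (hf : f ∈ X) (hle : le 𝒞 X d f) : d ∈ X :=
  hle X hX subset_rfl hf

theorem lt.mem (hX : X ∈ 𝒞.C) (hf : f ∈ X) (hlt : lt 𝒞 X d f) : d ∈ X :=
  hlt.1.mem hX hf

theorem le.of_subconfig (hst : IsStable 𝒞) (hX : X ∈ 𝒞.C) (hX' : X' ∈ 𝒞.C) (hsub : X' ⊆ X)
    (hf : f ∈ X') (hle : le 𝒞 X' d f) : le 𝒞 X d f := fun Z hZ hZX hfZ =>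
  (hle (Z ∩ X') (hst.2.2.2 Z hZ X' hX' X hX (Set.union_subset hZX hsub))
    Set.inter_subset_right ⟨hfZ, hf⟩).1

theorem lt.of_subconfig (hst : IsStable 𝒞) (hX : X ∈ 𝒞.C) (hX' : X' ∈ 𝒞.C) (hsub : X' ⊆ X)
    (hf : f ∈ X') (hlt : lt 𝒞 X' d f) : lt 𝒞 X d f :=
  ⟨hlt.1.of_subconfig hst hX hX' hsub hf, hlt.2⟩

/-- Peeling `X` down to `∅` one event at a time, the first of `d`, `e` to go separates them. -/
theorem le.antisymm (hst : IsStable 𝒞) (hX : X ∈ 𝒞.C) (hd : d ∈ X) (he : e ∈ X)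
    (hde : le 𝒞 X d e) (hed : le 𝒞 X e d) : d = e := by
  induction hn : X.ncard generalizing X with
  | zero => simp [Set.ncard_eq_zero (𝒞.finite X hX)] at hn; simp [hn] at hd
  | succ n ih =>
    obtain ⟨g, hg, hXg⟩ := hst.2.1 X hX (Set.nonempty_of_mem hd).ne_empty
    by_contra hne
    by_cases hgd : g = d
    · subst hgd
      exact (hde _ hXg Set.sdiff_subset ⟨he, Ne.symm hne⟩).2 rfl
    by_cases hge : g = e
    · subst hge
      exact (hed _ hXg Set.sdiff_subset ⟨hd, hne⟩).2 rfl
    refine hne (ih hXg ⟨hd, Ne.symm hgd⟩ ⟨he, Ne.symm hge⟩ (hde.anti Set.sdiff_subset)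
      (hed.anti Set.sdiff_subset) ?_)
    rw [Set.ncard_sdiff_singleton_of_mem hg, hn, Nat.add_sub_cancel]

theorem lt.trans (hst : IsStable 𝒞) (hX : X ∈ 𝒞.C) (hc : c ∈ X) (hab : lt 𝒞 X a b)
    (hbc : lt 𝒞 X b c) : lt 𝒞 X a c := by
  refine ⟨fun Z hZ hZX hcZ => hab.1 Z hZ hZX (hbc.1 Z hZ hZX hcZ), ?_⟩
  rintro rfl
  exact hab.2 (hab.1.antisymm hst hX hc (hbc.mem hX hc) hbc.1)

theorem not_lt_of_sdiff_singleton_mem (hXe : X \ {e} ∈ 𝒞.C) (hf : f ∈ X) : ¬ lt 𝒞 X e f := by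
  intro hlt
  exact (hlt.1 _ hXe Set.sdiff_subset ⟨hf, fun hfe => hlt.2 hfe.symm⟩).2 rfl

/-- If `g` is the event that connectedness lets us remove from `X`, then `X \ {e}` is the union
of `(X \ {g}) \ {e}` (by induction) and a sub-configuration witnessing `¬ e ≤ g`. -/
theorem sdiff_singleton_mem_of_maximal (hst : IsStable 𝒞) (hX : X ∈ 𝒞.C) (he : e ∈ X)
    (hmax : ∀ f ∈ X, ¬ lt 𝒞 X e f) : X \ {e} ∈ 𝒞.C := by
  induction hn : X.ncard generalizing X with
  | zero => simp [Set.ncard_eq_zero (𝒞.finite X hX)] at hn; simp [hn] at he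
  | succ n ih =>
    obtain ⟨g, hg, hXg⟩ := hst.2.1 X hX (Set.nonempty_of_mem he).ne_empty
    rcases eq_or_ne g e with rfl | hge
    · exact hXg
    have hXge : (X \ {g}) \ {e} ∈ 𝒞.C := by
      refine ih hXg ⟨he, Ne.symm hge⟩ (fun f hf hlt => hmax f hf.1 ?_) ?_
      · exact hlt.of_subconfig hst hX hXg Set.sdiff_subset hf
      · rw [Set.ncard_sdiff_singleton_of_mem hg, hn, Nat.add_sub_cancel]
    have hnle : ¬ le 𝒞 X e g := fun hle => hmax g hg ⟨hle, Ne.symm hge⟩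
    simp only [le, not_forall] at hnle
    obtain ⟨W, hW, hWX, hgW, heW⟩ := hnle
    have hunion : X \ {e} = (X \ {g}) \ {e} ∪ W := by
      ext x
      constructor
      · rintro ⟨hx, hxe⟩
        rcases eq_or_ne x g with rfl | hxg
        · exact Or.inr hgW
        · exact Or.inl ⟨⟨hx, hxg⟩, hxe⟩
      · rintro (⟨⟨hx, -⟩, hxe⟩ | hxW)
        · exact ⟨hx, hxe⟩
        · exact ⟨hWX hxW, fun hxe => heW (Set.mem_singleton_iff.mp hxe ▸ hxW)⟩
    rw [hunion]
    exact hst.2.2.1 _ hXge W hW X hX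
      (Set.union_subset (Set.sdiff_subset.trans Set.sdiff_subset) hWX)

end Causality

section Depth

variable {E L : Type*} {𝒞 : CS E L} {X : Set E} {e f : E} {n : ℕ}

/-- `depth 𝒞 X e = sSup (chainLengths 𝒞 X e)` holds by `rfl`. -/
def chainLengths (𝒞 : CS E L) (X : Set E) (e : E) : Set ℕ :=
  {n | ∃ l : List E, l.length = n ∧ l.IsChain (lt 𝒞 X) ∧ (∀ x ∈ l, x ∈ X) ∧ l.getLast? = some e}

theorem nodup_of_isChain (hst : IsStable 𝒞) (hX : X ∈ 𝒞.C) {l : List E}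
    (hc : l.IsChain (lt 𝒞 X)) (hl : ∀ x ∈ l, x ∈ X) : l.Nodup := by
  let r : E → E → Prop := fun a b => lt 𝒞 X a b ∧ b ∈ X
  have : Trans r r r := ⟨fun hab hbc => ⟨hab.1.trans hst hX hbc.2 hbc.1, hbc.2⟩⟩
  have hr : l.IsChain r := hc.imp_of_mem_imp fun _ b _ hb h => ⟨h, hl b hb⟩
  exact hr.pairwise.imp fun h => h.1.2

theorem bddAbove_chainLengths (hst : IsStable 𝒞) (hX : X ∈ 𝒞.C) :
    BddAbove (chainLengths 𝒞 X e) := by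
  classical
  refine ⟨X.ncard, ?_⟩
  rintro _ ⟨l, rfl, hc, hl, -⟩
  rw [← List.toFinset_card_of_nodup (nodup_of_isChain hst hX hc hl), ← Set.ncard_coe_finset]
  exact Set.ncard_le_ncard (fun x hx => hl x (List.mem_toFinset.mp hx)) (𝒞.finite X hX)

theorem le_depth (hst : IsStable 𝒞) (hX : X ∈ 𝒞.C) (hn : n ∈ chainLengths 𝒞 X e) :
    n ≤ depth 𝒞 X e :=
  le_csSup (bddAbove_chainLengths hst hX) hn

theorem depth_mem_chainLengths (hst : IsStable 𝒞) (hX : X ∈ 𝒞.C) (he : e ∈ X) :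
    depth 𝒞 X e ∈ chainLengths 𝒞 X e :=
  Nat.sSup_mem ⟨1, [e], rfl, List.isChain_singleton e, by simpa using he, rfl⟩
    (bddAbove_chainLengths hst hX)

theorem one_le_depth (hst : IsStable 𝒞) (hX : X ∈ 𝒞.C) (he : e ∈ X) : 1 ≤ depth 𝒞 X e :=
  le_depth hst hX ⟨[e], rfl, List.isChain_singleton e, by simpa using he, rfl⟩

theorem depth_lt_depth (hst : IsStable 𝒞) (hX : X ∈ 𝒞.C) (hf : f ∈ X) (hlt : lt 𝒞 X e f) :
    depth 𝒞 X e < depth 𝒞 X f := by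
  obtain ⟨l, hlen, hc, hl, hlast⟩ := depth_mem_chainLengths hst hX (hlt.mem hX hf)
  refine Nat.lt_of_succ_le (le_depth hst hX ⟨l ++ [f], by simp [hlen], ?_, ?_, by simp⟩)
  · exact List.IsChain.append hc (List.isChain_singleton f) (by simp [hlast, hlt])
  · simpa [or_imp, forall_and, hf] using hl

theorem exists_depth_eq_pred (hst : IsStable 𝒞) (hX : X ∈ 𝒞.C) (he : e ∈ X)
    (h2 : 2 ≤ depth 𝒞 X e) : ∃ d ∈ X, depth 𝒞 X d = depth 𝒞 X e - 1 := by
  obtain ⟨l, hlen, hc, hl, hlast⟩ := depth_mem_chainLengths hst hX he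
  have hne : l.dropLast ≠ [] := by
    rw [← List.length_pos_iff, List.length_dropLast]; omega
  have hle : l.getLast (by grind) = e := by grind
  have hd := hc.rel_getLast_dropLast hne
  rw [hle] at hd
  refine ⟨_, hd.mem hX he, le_antisymm ?_ (le_depth hst hX ⟨l.dropLast, ?_, ?_, ?_, ?_⟩)⟩
  · have := depth_lt_depth hst hX he hd; omega
  · simp [hlen]
  · exact hc.dropLast
  · exact fun x hx => hl x (List.mem_of_mem_dropLast hx)
  · exact List.getLast?_eq_some_getLast hne

theorem exists_depth_eq (hst : IsStable 𝒞) (hX : X ∈ 𝒞.C) (he : e ∈ X) (hn : 1 ≤ n)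
    (hne : n ≤ depth 𝒞 X e) : ∃ d ∈ X, depth 𝒞 X d = n := by
  obtain ⟨k, hk⟩ := Nat.exists_eq_add_of_le hne
  induction k generalizing e with
  | zero => exact ⟨e, he, by omega⟩
  | succ k ih =>
    obtain ⟨d, hd, hdk⟩ := exists_depth_eq_pred hst hX he (by omega)
    exact ih hd (by omega) (by omega)

theorem depth_sdiff_singleton (hst : IsStable 𝒞) (hX : X ∈ 𝒞.C) (hXe : X \ {e} ∈ 𝒞.C)
    (hf : f ∈ X) (hfe : f ≠ e) : depth 𝒞 (X \ {e}) f = depth 𝒞 X f := by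
  suffices chainLengths 𝒞 (X \ {e}) f = chainLengths 𝒞 X f from congrArg sSup this
  ext n
  constructor
  · rintro ⟨l, hlen, hc, hl, hlast⟩
    refine ⟨l, hlen, hc.imp_of_mem_imp fun a b _ hb hab => ?_, fun x hx => (hl x hx).1, hlast⟩
    exact hab.of_subconfig hst hX hXe Set.sdiff_subset (hl b hb)
  · rintro ⟨l, hlen, hc, -, hlast⟩
    -- a chain ending at `f` cannot pass through the maximal event `e`
    have hl : ∀ x ∈ l, x ∈ X \ {e} := by
      refine hc.backwards_induction _ _ (fun x y hxy hy => ⟨hxy.mem hX hy.1, ?_⟩) ?_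
      · rintro rfl
        exact not_lt_of_sdiff_singleton_mem hXe hy.1 hxy
      · intro hne
        rw [List.getLast?_eq_some_getLast hne, Option.some_inj] at hlast
        exact hlast ▸ ⟨hf, hfe⟩
    exact ⟨l, hlen, hc.imp fun _ _ h => h.anti Set.sdiff_subset, hl, hlast⟩

theorem sdiff_singleton_mem_of_forall_depth_le (hst : IsStable 𝒞) (hX : X ∈ 𝒞.C) (he : e ∈ X)
    (hmax : ∀ f ∈ X, depth 𝒞 X f ≤ depth 𝒞 X e) : X \ {e} ∈ 𝒞.C :=
  sdiff_singleton_mem_of_maximal hst hX he fun f hf hlt =>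
    (depth_lt_depth hst hX hf hlt).not_ge (hmax f hf)

end Depth

section Levels

variable {E L : Type*} {𝒞 : CS E L} {X : Set E} {e : E} {n : ℕ}

/-- The paper's `ℓ(X_{[n,n]})`, a set rather than a multiset by `injOn_label_levelEq`. -/
def levelLabels (𝒞 : CS E L) (X : Set E) (n : ℕ) : Set L :=
  𝒞.label '' levelEq 𝒞 X n

theorem label_mem_levelLabels (he : e ∈ X) : 𝒞.label e ∈ levelLabels 𝒞 X (depth 𝒞 X e) :=
  ⟨e, ⟨he, rfl⟩, rfl⟩

theorem injOn_label_levelEq (hst : IsStable 𝒞) (hac : NoEqAC 𝒞) (hX : X ∈ 𝒞.C) (n : ℕ) :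
    Set.InjOn 𝒞.label (levelEq 𝒞 X n) := by
  rintro d ⟨hd, hdn⟩ e ⟨he, hen⟩ hde
  refine hac X hX d hd e he ⟨fun hlt => ?_, fun hlt => ?_⟩ hde (hdn.trans hen.symm)
  · exact (depth_lt_depth hst hX he hlt).ne (hdn.trans hen.symm)
  · exact (depth_lt_depth hst hX hd hlt).ne (hen.trans hdn.symm)

theorem levelEq_sdiff_singleton (hst : IsStable 𝒞) (hX : X ∈ 𝒞.C) (hXe : X \ {e} ∈ 𝒞.C)
    (n : ℕ) : levelEq 𝒞 (X \ {e}) n = levelEq 𝒞 X n \ {e} := by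
  ext f
  simp only [levelEq, Set.mem_sdiff, Set.mem_ofPred_eq, Set.mem_singleton_iff]
  constructor
  · rintro ⟨⟨hf, hfe⟩, rfl⟩
    exact ⟨⟨hf, (depth_sdiff_singleton hst hX hXe hf hfe).symm⟩, hfe⟩
  · rintro ⟨⟨hf, rfl⟩, hfe⟩
    exact ⟨⟨hf, hfe⟩, depth_sdiff_singleton hst hX hXe hf hfe⟩

theorem levelLabels_sdiff_singleton (hst : IsStable 𝒞) (hac : NoEqAC 𝒞) (hX : X ∈ 𝒞.C)
    (he : e ∈ X) (hXe : X \ {e} ∈ 𝒞.C) :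
    levelLabels 𝒞 (X \ {e}) = Function.update (levelLabels 𝒞 X) (depth 𝒞 X e)
      (levelLabels 𝒞 X (depth 𝒞 X e) \ {𝒞.label e}) := by
  funext n
  rw [Function.update_apply, levelLabels, levelEq_sdiff_singleton hst hX hXe]
  split_ifs with hn
  · subst hn
    rw [(injOn_label_levelEq hst hac hX _).image_sdiff_subset
      (Set.singleton_subset_iff.mpr ⟨he, rfl⟩), Set.image_singleton, levelLabels]
  · rw [Set.sdiff_singleton_eq_self fun h => hn h.2.symm, levelLabels]

theorem levelLe_sdiff_singleton (hst : IsStable 𝒞) (hX : X ∈ 𝒞.C) (hXe : X \ {e} ∈ 𝒞.C)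
    (hn : n < depth 𝒞 X e) : levelLe 𝒞 (X \ {e}) n = levelLe 𝒞 X n := by
  ext f
  simp only [levelLe, Set.mem_sdiff, Set.mem_ofPred_eq, Set.mem_singleton_iff]
  constructor
  · rintro ⟨⟨hf, hfe⟩, hfn⟩
    exact ⟨hf, depth_sdiff_singleton hst hX hXe hf hfe ▸ hfn⟩
  · rintro ⟨hf, hfn⟩
    have hfe : f ≠ e := by rintro rfl; omega
    exact ⟨⟨hf, hfe⟩, (depth_sdiff_singleton hst hX hXe hf hfe).symm ▸ hfn⟩

theorem forall_depth_le_iff : (∀ f ∈ X, depth 𝒞 X f ≤ n) ↔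
    ∀ k, n < k → levelLabels 𝒞 X k = ∅ := by
  refine ⟨fun h k hk => ?_, fun h f hf => not_lt.mp fun hlt => ?_⟩
  · rw [levelLabels, Set.image_eq_empty]
    exact Set.eq_empty_of_forall_notMem fun f ⟨hf, hfk⟩ => (h f hf).not_gt (hfk ▸ hk)
  · exact Set.notMem_empty _ (h _ hlt ▸ label_mem_levelLabels hf)

end Levels

section Partners

variable {E₁ E₂ L : Type*} {𝒞 : CS E₁ L} {𝒟 : CS E₂ L} {X : Set E₁} {Y : Set E₂}

def LevelPartners (𝒞 : CS E₁ L) (𝒟 : CS E₂ L) (X : Set E₁) (Y : Set E₂) : Prop :=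
  ∀ x ∈ X, X \ {x} ∈ 𝒞.C → ∃ y ∈ Y, Y \ {y} ∈ 𝒟.C ∧ 𝒟.label y = 𝒞.label x ∧
    levelLabels 𝒞 (X \ {x}) = levelLabels 𝒟 (Y \ {y})

/-- Suppose all events of `Y` lie below `m := depth e`. Each event `y` of maximal depth `k` in
`Y` is then matched by an event of depth `m` in `X` (otherwise level `m` would differ), so
`ℓ y = ℓ e` and `L X k = L Y k \ {ℓ e} = ∅`, although `X` has events at every depth up to `m`. -/
theorem exists_depth_le_of_levelPartners (h𝒞 : IsStable 𝒞) (h𝒟 : IsStable 𝒟)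
    (hac𝒞 : NoEqAC 𝒞) (hac𝒟 : NoEqAC 𝒟) (hX : X ∈ 𝒞.C) (hY : Y ∈ 𝒟.C)
    (hXY : LevelPartners 𝒞 𝒟 X Y) (hYX : LevelPartners 𝒟 𝒞 Y X) {e : E₁} (he : e ∈ X) :
    ∃ y ∈ Y, depth 𝒞 X e ≤ depth 𝒟 Y y := by
  by_contra! hlt
  have hYm : levelLabels 𝒟 Y (depth 𝒞 X e) = ∅ :=
    forall_depth_le_iff.mp (fun y hy => Nat.le_pred_of_lt (hlt y hy)) _
      (Nat.pred_lt (Nat.one_le_iff_ne_zero.mp (one_le_depth h𝒞 hX he)))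
  obtain ⟨x₀, hx₀, hx₀max⟩ := Set.exists_max_image X (depth 𝒞 X) (𝒞.finite X hX) ⟨e, he⟩
  obtain ⟨y, hy, -⟩ := hXY x₀ hx₀ (sdiff_singleton_mem_of_forall_depth_le h𝒞 hX hx₀ hx₀max)
  obtain ⟨y₀, hy₀, hy₀max⟩ := Set.exists_max_image Y (depth 𝒟 Y) (𝒟.finite Y hY) ⟨y, hy⟩
  have hn := hlt y₀ hy₀
  have top : ∀ y ∈ Y, depth 𝒟 Y y = depth 𝒟 Y y₀ → 𝒟.label y = 𝒞.label e ∧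
      levelLabels 𝒞 X (depth 𝒟 Y y₀) = levelLabels 𝒟 Y (depth 𝒟 Y y₀) \ {𝒞.label e} := by
    intro y hy hyn
    have hYy := sdiff_singleton_mem_of_forall_depth_le h𝒟 hY hy (hyn ▸ hy₀max)
    obtain ⟨x, hx, hXx, hlab, hL⟩ := hYX y hy hYy
    rw [levelLabels_sdiff_singleton h𝒟 hac𝒟 hY hy hYy,
      levelLabels_sdiff_singleton h𝒞 hac𝒞 hX hx hXx, hlab, hyn] at hL
    have hm := congrFun hL (depth 𝒞 X e)
    rw [Function.update_of_ne hn.ne', hYm] at hm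
    have hxm : depth 𝒞 X x = depth 𝒞 X e := by
      by_contra hxm
      rw [Function.update_of_ne (Ne.symm hxm)] at hm
      exact Set.notMem_empty _ (hm ▸ label_mem_levelLabels he)
    rw [hxm, Function.update_self] at hm
    have hye : 𝒟.label y = 𝒞.label e := by
      by_contra hye
      have : 𝒞.label e ∈ levelLabels 𝒞 X (depth 𝒞 X e) \ {𝒟.label y} :=
        ⟨label_mem_levelLabels he, Ne.symm hye⟩
      exact Set.notMem_empty _ (hm ▸ this)
    have hn' := congrFun hL (depth 𝒟 Y y₀)
    rw [Function.update_self, hxm, Function.update_of_ne hn.ne, hye] at hn'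
    exact ⟨hye, hn'.symm⟩
  obtain ⟨d, hd, hdn⟩ := exists_depth_eq h𝒞 hX he (one_le_depth h𝒟 hY hy₀) hn.le
  have hc : 𝒞.label d ∈ levelLabels 𝒞 X (depth 𝒟 Y y₀) := hdn ▸ label_mem_levelLabels hd
  rw [(top y₀ hy₀ rfl).2] at hc
  obtain ⟨y, ⟨hy, hyn⟩, hyd⟩ := hc.1
  exact hc.2 (hyd ▸ (top y hy hyn).1)

/-- If no event `x` of maximal depth `m` in `X` had a partner of depth `m`, we would get
`levelLabels 𝒟 Y m = levelLabels 𝒞 X m \ {ℓ x}` for each of them; but the label of an event of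
depth `m` in `Y` lies on the left and labels one of these `x`. -/
theorem levelLabels_eq_of_levelPartners (h𝒞 : IsStable 𝒞) (h𝒟 : IsStable 𝒟)
    (hac𝒞 : NoEqAC 𝒞) (hac𝒟 : NoEqAC 𝒟) (hX : X ∈ 𝒞.C) (hY : Y ∈ 𝒟.C)
    (hXY : LevelPartners 𝒞 𝒟 X Y) (hYX : LevelPartners 𝒟 𝒞 Y X) :
    levelLabels 𝒞 X = levelLabels 𝒟 Y := by
  have hYX' := fun y (hy : y ∈ Y) =>
    exists_depth_le_of_levelPartners h𝒟 h𝒞 hac𝒟 hac𝒞 hY hX hYX hXY hy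
  rcases X.eq_empty_or_nonempty with rfl | hXne
  · obtain rfl : Y = ∅ := Set.eq_empty_of_forall_notMem fun y hy => by
      obtain ⟨x, hx, -⟩ := hYX' y hy
      exact hx
    funext n
    simp [levelLabels, levelEq]
  obtain ⟨e, he, hmax⟩ := Set.exists_max_image X (depth 𝒞 X) (𝒞.finite X hX) hXne
  obtain ⟨y₁, hy₁, hy₁m⟩ : ∃ y ∈ Y, depth 𝒟 Y y = depth 𝒞 X e := by
    obtain ⟨y, hy, hle⟩ := exists_depth_le_of_levelPartners h𝒞 h𝒟 hac𝒞 hac𝒟 hX hY hXY hYX he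
    obtain ⟨x, hx, hyx⟩ := hYX' y hy
    exact ⟨y, hy, le_antisymm (hyx.trans (hmax x hx)) hle⟩
  by_contra hne
  have key : ∀ x ∈ X, depth 𝒞 X x = depth 𝒞 X e →
      levelLabels 𝒟 Y (depth 𝒞 X e) = levelLabels 𝒞 X (depth 𝒞 X e) \ {𝒞.label x} := by
    intro x hx hxm
    have hXx := sdiff_singleton_mem_of_forall_depth_le h𝒞 hX hx (hxm ▸ hmax)
    obtain ⟨y, hy, hYy, hlab, hL⟩ := hXY x hx hXx
    rw [levelLabels_sdiff_singleton h𝒞 hac𝒞 hX hx hXx,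
      levelLabels_sdiff_singleton h𝒟 hac𝒟 hY hy hYy, hlab, hxm] at hL
    rcases eq_or_ne (depth 𝒟 Y y) (depth 𝒞 X e) with hym | hym
    · rw [hym] at hL
      refine absurd (eq_of_update_sdiff_singleton_eq ?_ ?_ hL) hne
      · exact hxm ▸ label_mem_levelLabels hx
      · exact hym ▸ hlab ▸ label_mem_levelLabels hy
    · have hm := congrFun hL (depth 𝒞 X e)
      rwa [Function.update_self, Function.update_of_ne hym.symm, eq_comm] at hm
  have hc : 𝒟.label y₁ ∈ levelLabels 𝒟 Y (depth 𝒞 X e) := hy₁m ▸ label_mem_levelLabels hy₁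
  have hc' := hc
  rw [key e he rfl] at hc
  obtain ⟨g, ⟨hg, hgm⟩, hgc⟩ := hc.1
  rw [key g hg hgm, hgc] at hc'
  exact hc'.2 rfl

end Partners

section Transitions

variable {E L : Type*} {𝒞 : CS E L} {X X' : Set E} {a : L} {A : Multiset L}

theorem RTrans.exists_eq_sdiff (h : RTrans 𝒞 a X X') :
    ∃ e ∈ X, X' = X \ {e} ∧ X \ {e} ∈ 𝒞.C ∧ 𝒞.label e = a := by
  obtain ⟨hX', -, hsub, e, he, rfl⟩ := h
  have hX'e : X' = X \ {e} := by rw [← he, Set.sdiff_sdiff_cancel_left hsub]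
  exact ⟨e, (he.symm ▸ Set.mem_singleton e : e ∈ X \ X').1, hX'e, hX'e ▸ hX', rfl⟩

theorem rTrans_sdiff_singleton {e : E} (hX : X ∈ 𝒞.C) (he : e ∈ X) (hXe : X \ {e} ∈ 𝒞.C) :
    RTrans 𝒞 (𝒞.label e) X (X \ {e}) :=
  ⟨hXe, hX, Set.sdiff_subset, e, Set.sdiff_sdiff_cancel_left (Set.singleton_subset_iff.mpr he),
    rfl⟩

theorem rEqStep_zero (hX : X ∈ 𝒞.C) : REqStep 𝒞 0 X X :=
  ⟨⟨hX, hX, subset_rfl, ∅, by simp, by simp, rfl⟩, by simp⟩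

theorem RTrans.rEqStep (h : RTrans 𝒞 a X X') : REqStep 𝒞 {a} X X' := by
  obtain ⟨hX', hX, hsub, e, he, rfl⟩ := h
  refine ⟨⟨hX', hX, hsub, {e}, by simp [he], ?_, rfl⟩, ?_⟩
  · simp only [Finset.mem_singleton]
    rintro _ rfl _ rfl
    exact ⟨fun h => h.2 rfl, fun h => h.2 rfl⟩
  · simp only [he, Set.mem_singleton_iff]
    rintro _ rfl _ rfl
    rfl

/-- The events of such a step share label and depth and are pairwise concurrent, so `NoEqAC`
leaves at most one of them. -/
theorem REqStep.eq_zero_or_rTrans (hac : NoEqAC 𝒞) (hA : Hom A) (h : REqStep 𝒞 A X X') :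
    A = 0 ∧ X' = X ∨ ∃ a, A = {a} ∧ RTrans 𝒞 a X X' := by
  obtain ⟨⟨hX', hX, hsub, F, hF, hco, rfl⟩, hdepth⟩ := h
  have hFX : ∀ d ∈ F, d ∈ X \ X' := fun d hd => hF ▸ Finset.mem_coe.mpr hd
  have hF₁ : (F : Set E).Subsingleton := fun d hd e he =>
    hac X hX d (hFX d hd).1 e (hFX e he).1 (hco d hd e he)
      (hA _ (Multiset.mem_map_of_mem _ hd) _ (Multiset.mem_map_of_mem _ he))
      (hdepth d (hFX d hd) e (hFX e he))
  rcases hF₁.eq_empty_or_singleton with hF₀ | ⟨f, hFf⟩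
  · rw [Finset.coe_eq_empty] at hF₀
    subst hF₀
    refine Or.inl ⟨rfl, hsub.antisymm (Set.sdiff_eq_empty.mp ?_)⟩
    rw [← hF, Finset.coe_empty]
  · rw [Finset.coe_eq_singleton] at hFf
    subst hFf
    exact Or.inr ⟨𝒞.label f, rfl, hX', hX, hsub, f, by rw [← hF, Finset.coe_singleton], rfl⟩

end Transitions

section Bisimulation

variable {E₁ E₂ : Type u} {L : Type*} {𝒞 : CS E₁ L} {𝒟 : CS E₂ L} {R : Set E₁ → Set E₂ → Prop}
  {X : Set E₁} {Y : Set E₂}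

theorem IsRB.symm (hR : IsRB 𝒞 𝒟 R) : IsRB 𝒟 𝒞 (fun Y X => R X Y) :=
  ⟨⟨⟨hR.1.1.1, fun Y X h => (hR.1.1.2 X Y h).symm⟩,
      fun Y X h => ⟨(hR.1.2 X Y h).2, (hR.1.2 X Y h).1⟩⟩,
    fun Y X h => ⟨(hR.2 X Y h).2, (hR.2 X Y h).1⟩⟩

theorem IsRB.mem (hR : IsRB 𝒞 𝒟 R) (hXY : R X Y) : X ∈ 𝒞.C ∧ Y ∈ 𝒟.C :=
  hR.1.1.2 X Y hXY

theorem IsRB.exists_partner (hR : IsRB 𝒞 𝒟 R) (hXY : R X Y) {x : E₁} (hx : x ∈ X)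
    (hXx : X \ {x} ∈ 𝒞.C) :
    ∃ y ∈ Y, Y \ {y} ∈ 𝒟.C ∧ 𝒟.label y = 𝒞.label x ∧ R (X \ {x}) (Y \ {y}) := by
  obtain ⟨Y', hY', hR'⟩ :=
    (hR.2 X Y hXY).1 _ _ (rTrans_sdiff_singleton (hR.mem hXY).1 hx hXx)
  obtain ⟨y, hy, rfl, hYy, hlab⟩ := hY'.exists_eq_sdiff
  exact ⟨y, hy, hYy, hlab, hR'⟩

theorem IsRB.exists_rEqStep (hac : NoEqAC 𝒞) (hR : IsRB 𝒞 𝒟 R) (hXY : R X Y)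
    {A : Multiset L} {X' : Set E₁} (hA : Hom A) (h : REqStep 𝒞 A X X') :
    ∃ Y', REqStep 𝒟 A Y Y' ∧ R X' Y' := by
  rcases h.eq_zero_or_rTrans hac hA with ⟨rfl, rfl⟩ | ⟨a, rfl, ha⟩
  · exact ⟨Y, rEqStep_zero (hR.mem hXY).2, hXY⟩
  · obtain ⟨Y', hY', hR'⟩ := (hR.2 X Y hXY).1 a X' ha
    exact ⟨Y', hY'.rEqStep, hR'⟩

theorem IsRB.isRHESB (hac𝒞 : NoEqAC 𝒞) (hac𝒟 : NoEqAC 𝒟) (hR : IsRB 𝒞 𝒟 R) :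
    IsRHESB 𝒞 𝒟 R :=
  ⟨hR.1.1, fun _ _ hXY => ⟨(hR.1.2 _ _ hXY).1, (hR.1.2 _ _ hXY).2,
    fun _ _ hA h => hR.exists_rEqStep hac𝒞 hXY hA h,
    fun _ _ hA h => hR.symm.exists_rEqStep hac𝒟 hXY hA h⟩⟩

variable (h𝒞 : IsStable 𝒞) (h𝒟 : IsStable 𝒟) (hac𝒞 : NoEqAC 𝒞) (hac𝒟 : NoEqAC 𝒟)
include h𝒞 h𝒟 hac𝒞 hac𝒟

theorem IsRB.levelLabels_eq (hR : IsRB 𝒞 𝒟 R) (hXY : R X Y) :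
    levelLabels 𝒞 X = levelLabels 𝒟 Y := by
  induction hn : X.ncard using Nat.strong_induction_on generalizing X Y with
  | _ n ih =>
    obtain ⟨hX, hY⟩ := hR.mem hXY
    have ih' : ∀ x ∈ X, ∀ y, R (X \ {x}) (Y \ {y}) →
        levelLabels 𝒞 (X \ {x}) = levelLabels 𝒟 (Y \ {y}) := fun x hx y h =>
      ih _ (hn ▸ Set.ncard_sdiff_singleton_lt_of_mem hx (𝒞.finite X hX)) h rfl
    refine levelLabels_eq_of_levelPartners h𝒞 h𝒟 hac𝒞 hac𝒟 hX hY ?_ ?_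
    · intro x hx hXx
      obtain ⟨y, hy, hYy, hlab, hR'⟩ := hR.exists_partner hXY hx hXx
      exact ⟨y, hy, hYy, hlab, ih' x hx y hR'⟩
    · intro y hy hYy
      obtain ⟨x, hx, hXx, hlab, hR'⟩ := hR.symm.exists_partner hXY hy hYy
      exact ⟨x, hx, hXx, hlab, (ih' x hx y hR').symm⟩

theorem IsRB.depth_eq (hR : IsRB 𝒞 𝒟 R) (hXY : R X Y) {x : E₁} {y : E₂} (hx : x ∈ X)
    (hXx : X \ {x} ∈ 𝒞.C) (hy : y ∈ Y) (hYy : Y \ {y} ∈ 𝒟.C) (hlab : 𝒟.label y = 𝒞.label x)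
    (hR' : R (X \ {x}) (Y \ {y})) : depth 𝒟 Y y = depth 𝒞 X x := by
  obtain ⟨hX, hY⟩ := hR.mem hXY
  have hL := hR.levelLabels_eq h𝒞 h𝒟 hac𝒞 hac𝒟 hR'
  rw [levelLabels_sdiff_singleton h𝒞 hac𝒞 hX hx hXx,
    levelLabels_sdiff_singleton h𝒟 hac𝒟 hY hy hYy, hlab,
    ← hR.levelLabels_eq h𝒞 h𝒟 hac𝒞 hac𝒟 hXY] at hL
  by_contra hne
  have hm := congrFun hL (depth 𝒞 X x)
  rw [Function.update_self, Function.update_of_ne (Ne.symm hne)] at hm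
  exact (hm ▸ label_mem_levelLabels hx : _ ∈ levelLabels 𝒞 X _ \ {𝒞.label x}).2 rfl

theorem IsRB.rel_levelLe (hR : IsRB 𝒞 𝒟 R) (hXY : R X Y) (n : ℕ) :
    R (levelLe 𝒞 X n) (levelLe 𝒟 Y n) := by
  induction hk : X.ncard using Nat.strong_induction_on generalizing X Y with
  | _ k ih =>
    obtain ⟨hX, hY⟩ := hR.mem hXY
    by_cases hXn : ∀ x ∈ X, depth 𝒞 X x ≤ n
    · have hYn : ∀ y ∈ Y, depth 𝒟 Y y ≤ n := by
        rw [forall_depth_le_iff, ← hR.levelLabels_eq h𝒞 h𝒟 hac𝒞 hac𝒟 hXY]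
        exact forall_depth_le_iff.mp hXn
      rwa [levelLe, levelLe, Set.sep_eq_self_iff_mem_true.mpr hXn,
        Set.sep_eq_self_iff_mem_true.mpr hYn]
    push Not at hXn
    obtain ⟨x₁, hx₁, hx₁n⟩ := hXn
    obtain ⟨e, he, hmax⟩ := Set.exists_max_image X (depth 𝒞 X) (𝒞.finite X hX) ⟨x₁, hx₁⟩
    have hXe := sdiff_singleton_mem_of_forall_depth_le h𝒞 hX he hmax
    obtain ⟨e', he', hYe', hlab, hR'⟩ := hR.exists_partner hXY he hXe
    have hen : n < depth 𝒞 X e := hx₁n.trans_le (hmax x₁ hx₁)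
    have he'n : n < depth 𝒟 Y e' := hR.depth_eq h𝒞 h𝒟 hac𝒞 hac𝒟 hXY he hXe he' hYe' hlab hR' ▸ hen
    rw [← levelLe_sdiff_singleton h𝒞 hX hXe hen, ← levelLe_sdiff_singleton h𝒟 hY hYe' he'n]
    exact ih _ (hk ▸ Set.ncard_sdiff_singleton_lt_of_mem he (𝒞.finite X hX)) hR' rfl

end Bisimulation

theorem labelMS_eq_of_image_eq {E₁ E₂ L : Type*} {𝒞 : CS E₁ L} {𝒟 : CS E₂ L} {S : Set E₁}
    {T : Set E₂} (hS : S.Finite) (hT : T.Finite) (hSi : S.InjOn 𝒞.label)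
    (hTi : T.InjOn 𝒟.label) (h : 𝒞.label '' S = 𝒟.label '' T) :
    labelMS 𝒞 S = labelMS 𝒟 T := by
  classical
  rw [labelMS, labelMS, dif_pos hS, dif_pos hT,
    ← Finset.image_val_of_injOn (by simpa using hSi),
    ← Finset.image_val_of_injOn (by simpa using hTi)]
  congr 1
  ext a
  simpa using Set.ext_iff.mp h a

end CS

/-- without equidepth auto-concurrency any reverse bisimulation is
an RHESB; in particular related configurations have related truncations at each
depth and equal label multisets at each depth level. -/
theorem stmt19 {E₁ E₂ : Type u} {L : Type v} (𝒞 : CS E₁ L) (𝒟 : CS E₂ L)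
    (h𝒞 : IsStable 𝒞) (h𝒟 : IsStable 𝒟)
    (hac𝒞 : NoEqAC 𝒞) (hac𝒟 : NoEqAC 𝒟)
    (R : Set E₁ → Set E₂ → Prop) (hR : IsRB 𝒞 𝒟 R) :
    IsRHESB 𝒞 𝒟 R ∧
    (∀ X Y, R X Y → ∀ n : ℕ,
      R (levelLe 𝒞 X n) (levelLe 𝒟 Y n) ∧
      labelMS 𝒞 (levelEq 𝒞 X n) = labelMS 𝒟 (levelEq 𝒟 Y n)) := by
  refine ⟨hR.isRHESB hac𝒞 hac𝒟, fun X Y hXY n =>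
    ⟨hR.rel_levelLe h𝒞 h𝒟 hac𝒞 hac𝒟 hXY n, ?_⟩⟩
  obtain ⟨hX, hY⟩ := hR.mem hXY
  exact labelMS_eq_of_image_eq
    ((𝒞.finite X hX).subset fun _ h => h.1) ((𝒟.finite Y hY).subset fun _ h => h.1)
    (injOn_label_levelEq h𝒞 hac𝒞 hX n) (injOn_label_levelEq h𝒟 hac𝒟 hY n)
    (congrFun (hR.levelLabels_eq h𝒞 h𝒟 hac𝒞 hac𝒟 hXY) n)
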